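/- Let δ be a circular semi-flower automaton with state set Q, alphabet A, initial-final state q0, and distinguished letter a whose letter map ā is a circular permutation, and suppose the set BPI of branch points going in is exactly {q0, qm} with q0 ≠ qm. Then for every word w ∈ A*, if the image of the induced map w̄ : Q → Q has exactly two elements, then there exists i ∈ ℕ such that the image of w̄ equals the image of the set {q0, qm} under ā^i, i.e., {ā^i(q0), ā^i(qm)}. -/
import Mathlib


/-- Extension of the transition function `δ : Q → A → Q` to words (lists of letters):
`δ*(q, ε) = q` and `δ*(q, a·w) = δ*(δ(q,a), w)`. -/
def deltaStar {Q A : Type*} (δ : Q → A → Q) : Q → List A → Q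
  | q, [] => q
  | q, a :: w => deltaStar δ (δ q a) w

/-- `δ` (with initial-final state `q0`) is a semi-flower automaton: every state is
accessible and coaccessible, and every cycle passes through `q0` (i.e. for every
nonempty word `w` labelling a cycle at `q`, some prefix of `w` leads from `q` to `q0`). -/
def IsSFA {Q A : Type*} (δ : Q → A → Q) (q0 : Q) : Prop :=
  (∀ q : Q, ∃ w : List A, deltaStar δ q0 w = q) ∧
  (∀ q : Q, ∃ w : List A, deltaStar δ q w = q0) ∧
  (∀ (q : Q) (w : List A), w ≠ [] → deltaStar δ q w = q →
    ∃ u : List A, u <+: w ∧ deltaStar δ q u = q0)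

/-- A map `f : Q → Q` is a circular permutation if it is bijective and for all
`p q : Q` there is `k : ℕ` with `f^[k] p = q`. -/
def IsCircularPerm {Q : Type*} (f : Q → Q) : Prop :=
  Function.Bijective f ∧ ∀ p q : Q, ∃ k : ℕ, f^[k] p = q

/-- The set of branch points going in (bpis): states that are the target of two
distinct transitions. -/
def BPI {Q A : Type*} (δ : Q → A → Q) : Set Q :=
  {q | ∃ pb₁ pb₂ : Q × A, pb₁ ≠ pb₂ ∧ δ pb₁.1 pb₁.2 = q ∧ δ pb₂.1 pb₂.2 = q}


lemma deltaStar_append {Q A : Type*} (δ : Q → A → Q) (q : Q) (u v : List A) :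
    deltaStar δ q (u ++ v) = deltaStar δ (deltaStar δ q u) v := by
  induction u generalizing q with
  | nil => rfl
  | cons c u ih => simp [deltaStar, ih]

lemma deltaStar_replicate {Q A : Type*} (δ : Q → A → Q) (q : Q) (a : A) (k : ℕ) :
    deltaStar δ q (List.replicate k a) = (fun q => δ q a)^[k] q := by
  induction k generalizing q with
  | zero => rfl
  | succ k ih =>
    rw [List.replicate_succ]
    show deltaStar δ (δ q a) (List.replicate k a) = _
    rw [ih, Function.iterate_succ_apply]

lemma split_last {A : Type*} (a : A) (w : List A) :
    (∀ x ∈ w, x = a) ∨ ∃ u b v, w = u ++ b :: v ∧ b ≠ a ∧ ∀ x ∈ v, x = a := by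
  induction w using List.reverseRecOn with
  | nil => left; simp
  | append_singleton w c ih =>
    by_cases hc : c = a
    · rcases ih with h | ⟨u, b, v, rfl, hb, hv⟩
      · left; intro x hx
        rcases List.mem_append.mp hx with h1 | h1
        · exact h x h1
        · subst hc; simpa using h1
      · right
        refine ⟨u, b, v ++ [c], by simp, hb, ?_⟩
        intro x hx
        rcases List.mem_append.mp hx with h1 | h1
        · exact hv x h1
        · subst hc; simpa using h1
    · right; exact ⟨w, c, [], by simp, hc, by simp⟩

/-- In a circular semi-flower automaton with exactly two bpis `q0` and `qm`, every
word map whose image has exactly two elements has image the image of `{q0, qm}`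
under some power of the letter map of `a`. -/
theorem csfa_two_bpi_rank_two_words {Q A : Type*} [Fintype Q] [Nonempty Q] [Fintype A]
    (δ : Q → A → Q) (q0 : Q) (hSFA : IsSFA δ q0)
    (a : A) (hca : IsCircularPerm (fun q => δ q a))
    (qm : Q) (hne : q0 ≠ qm) (hbpi : BPI δ = {q0, qm})
    (w : List A) (hw : (Set.range (fun q => deltaStar δ q w)).ncard = 2) :
    ∃ i : ℕ, Set.range (fun q => deltaStar δ q w) =
      {(fun q => δ q a)^[i] q0, (fun q => δ q a)^[i] qm} := by
  obtain ⟨hbij, -⟩ := hca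
  have hAin : ∀ (p : Q) (b : A), b ≠ a → δ p b = q0 ∨ δ p b = qm := by
    intro p b hb
    obtain ⟨p', hp'⟩ := hbij.2 (δ p b)
    have hmem : δ p b ∈ BPI δ :=
      ⟨(p, b), (p', a), fun h => hb (congrArg Prod.snd h), rfl, hp'⟩
    rw [hbpi] at hmem
    exact hmem
  rcases split_last a w with hall | ⟨u, b, v, hwe, hb, hv⟩
  · -- all letters are a: the word map is bijective, so Q = {q0, qm}
    have hrep : w = List.replicate w.length a := List.eq_replicate_of_mem hall
    have hfun : (fun q => deltaStar δ q w) = (fun q => δ q a)^[w.length] := by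
      funext q
      conv_lhs => rw [hrep]
      exact deltaStar_replicate δ q a w.length
    have hbij' : Function.Bijective ((fun q => δ q a)^[w.length]) :=
      hbij.iterate w.length
    have hrange : Set.range (fun q => deltaStar δ q w) = Set.univ := by
      rw [hfun]; exact hbij'.2.range_eq
    have hpair : ({q0, qm} : Set Q) = Set.univ := by
      apply Set.eq_of_subset_of_ncard_le (Set.subset_univ _)
      rw [← hrange, hw, Set.ncard_pair hne]
    refine ⟨0, ?_⟩
    simp only [Function.iterate_zero, id_eq]
    rw [hrange, hpair]
  · -- w = u ++ b :: v with b ≠ a and v a power of a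
    have hvrep : v = List.replicate v.length a := List.eq_replicate_of_mem hv
    set f : Q → Q := fun q => δ q a with hf
    have key : ∀ q, deltaStar δ q w = f^[v.length] (δ (deltaStar δ q u) b) := by
      intro q
      rw [hwe, deltaStar_append]
      show deltaStar δ (δ (deltaStar δ q u) b) v = _
      conv_lhs => rw [hvrep]
      exact deltaStar_replicate δ _ a v.length
    have hsub : Set.range (fun q => deltaStar δ q w) ⊆
        {f^[v.length] q0, f^[v.length] qm} := by
      rintro x ⟨q, rfl⟩
      simp only [key q]
      rcases hAin (deltaStar δ q u) b hb with h | h <;> rw [h]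
      · exact Set.mem_insert _ _
      · exact Set.mem_insert_iff.mpr (Or.inr rfl)
    have hne' : f^[v.length] q0 ≠ f^[v.length] qm :=
      fun h => hne ((hbij.iterate v.length).1 h)
    refine ⟨v.length, ?_⟩
    apply Set.eq_of_subset_of_ncard_le hsub
    rw [hw, Set.ncard_pair hne']
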